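/- Let L > π and c > 1 + π/(L-π), and set η = tanh⁻¹(cπ/((c-1)L)) > 0. Then the 2L-periodic function φ_c(ξ) = (2cπ/L)·sinh(η)/(cosh(η) - cos(πξ/L)) is a positive smooth solution of the travelling-wave equation c H φ_c' + (c-1)φ_c - (1/2)φ_c² = 0, where H is the 2L-periodic Hilbert transform. -/

import Mathlib

/-!
Existence of periodic travelling waves for the rBO equation (Section 5):
for L > π, c > 1 + π/(L−π) and η = tanh⁻¹(cπ/((c−1)L)) > 0, the 2L-periodic
function
  φ_c(ξ) = (2cπ/L) sinh(η)/(cosh(η) − cos(πξ/L))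
is positive and smooth, and solves  c H φ_c' + (c−1) φ_c − φ_c²/2 = 0,
where H is the 2L-periodic Hilbert transform.  Since the Fourier coefficients
of φ_c are a_n = (2πc/L) e^{−η|n|} and (Hφ')^(n) = (π|n|/L) φ̂(n), the
travelling-wave equation is equivalent to the coefficient identity
  c(1 + (π/L)|n|) a_n − a_n = (1/2) Σ_m a_m a_{n−m}   for all n ∈ ℤ,
which is the form stated below.
-/

/-- The inverse hyperbolic tangent, `tanh⁻¹ x = (1/2) log((1+x)/(1-x))`. -/
noncomputable def arctanh (x : ℝ) : ℝ := (1 / 2) * Real.log ((1 + x) / (1 - x))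

/-- The Fourier decay rate `η(c) = tanh⁻¹(cπ/((c−1)L))`. -/
noncomputable def ηc (L c : ℝ) : ℝ := arctanh (c * Real.pi / ((c - 1) * L))

/-- The periodic travelling wave `φ_c`. -/
noncomputable def φwave (L c : ℝ) (ξ : ℝ) : ℝ :=
  (2 * c * Real.pi / L) * Real.sinh (ηc L c) /
    (Real.cosh (ηc L c) - Real.cos (Real.pi * ξ / L))

/-- The Fourier coefficients `a_n = (2πc/L) e^{−η|n|}` of `φ_c`. -/
noncomputable def awave (L c : ℝ) (n : ℤ) : ℝ :=
  (2 * Real.pi * c / L) * Real.exp (-(ηc L c) * |(n : ℝ)|)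

/-- Key convolution sum, nonnegative case: for `η > 0` and `k : ℕ`,
`∑_{m ∈ ℤ} e^{-η|m|} e^{-η|k-m|} = e^{-ηk} (k + 1 + 2q/(1-q))`, `q = e^{-2η}`. -/
lemma hasSum_conv_nat (η : ℝ) (hη : 0 < η) (k : ℕ) :
    HasSum (fun m : ℤ => Real.exp (-η * |(m : ℝ)|) * Real.exp (-η * |(k : ℝ) - (m : ℝ)|))
      (Real.exp (-η * (k : ℝ)) *
        ((k : ℝ) + 1 + 2 * Real.exp (-(2 * η)) / (1 - Real.exp (-(2 * η))))) := by
  set q : ℝ := Real.exp (-(2 * η)) with hq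
  have hq0 : 0 < q := Real.exp_pos _
  have hq1 : q < 1 := by
    rw [hq, Real.exp_lt_one_iff]; linarith
  have hgeo : HasSum (fun j : ℕ => q ^ j) (1 - q)⁻¹ :=
    hasSum_geometric_of_lt_one hq0.le hq1
  set F : ℤ → ℝ := fun m : ℤ =>
    Real.exp (-η * |(m : ℝ)|) * Real.exp (-η * |(k : ℝ) - (m : ℝ)|) with hF
  -- negative part
  have hneg : HasSum (fun j : ℕ => F (-((j : ℤ) + 1)))
      (Real.exp (-η * (k : ℝ)) * q * (1 - q)⁻¹) := by
    have hfun : (fun j : ℕ => F (-((j : ℤ) + 1)))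
        = fun j : ℕ => Real.exp (-η * (k : ℝ)) * q * q ^ j := by
      funext j
      rw [hF]
      simp only []
      have h1 : |((-(((j : ℤ)) + 1) : ℤ) : ℝ)| = (j : ℝ) + 1 := by
        push_cast
        rw [abs_neg, abs_of_nonneg (by positivity)]
      have h2 : |(k : ℝ) - ((-(((j : ℤ)) + 1) : ℤ) : ℝ)| = (k : ℝ) + (j : ℝ) + 1 := by
        push_cast
        rw [sub_neg_eq_add, abs_of_nonneg (by positivity)]
        ring
      rw [h1, h2, hq, ← Real.exp_nat_mul, ← Real.exp_add, ← Real.exp_add, ← Real.exp_add]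
      congr 1
      ring
    rw [hfun]
    exact hgeo.mul_left _
  -- positive part
  have hpos : HasSum (fun j : ℕ => F ((j : ℤ)))
      (Real.exp (-η * (k : ℝ)) * q * (1 - q)⁻¹ + ((k : ℝ) + 1) * Real.exp (-η * (k : ℝ))) := by
    set f : ℕ → ℝ := fun j => F ((j : ℤ)) with hf
    have htail : HasSum (fun j : ℕ => f (j + (k + 1)))
        (Real.exp (-η * (k : ℝ)) * q * (1 - q)⁻¹) := by
      have hfun : (fun j : ℕ => f (j + (k + 1)))
          = fun j : ℕ => Real.exp (-η * (k : ℝ)) * q * q ^ j := by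
        funext j
        rw [hf, hF]
        simp only []
        have h1 : |((((j + (k + 1) : ℕ) : ℤ)) : ℝ)| = (j : ℝ) + (k : ℝ) + 1 := by
          push_cast
          rw [abs_of_nonneg (by positivity)]
          ring
        have h2 : |(k : ℝ) - ((((j + (k + 1) : ℕ) : ℤ)) : ℝ)| = (j : ℝ) + 1 := by
          push_cast
          rw [abs_sub_comm, abs_of_nonneg (by linarith [Nat.cast_nonneg (α := ℝ) j])]
          ring
        rw [h1, h2, hq, ← Real.exp_nat_mul, ← Real.exp_add, ← Real.exp_add, ← Real.exp_add]
        congr 1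
        ring
      rw [hfun]
      exact hgeo.mul_left _
    have hfin : ∑ i ∈ Finset.range (k + 1), f i = ((k : ℝ) + 1) * Real.exp (-η * (k : ℝ)) := by
      have hterm : ∀ i ∈ Finset.range (k + 1), f i = Real.exp (-η * (k : ℝ)) := by
        intro i hi
        have hik : (i : ℝ) ≤ (k : ℝ) := by
          exact_mod_cast Nat.lt_succ_iff.mp (Finset.mem_range.mp hi)
        rw [hf, hF]
        simp only []
        have h1 : |(((i : ℤ)) : ℝ)| = (i : ℝ) := by
          push_cast
          exact abs_of_nonneg (by positivity)
        have h2 : |(k : ℝ) - (((i : ℤ)) : ℝ)| = (k : ℝ) - (i : ℝ) := by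
          push_cast
          exact abs_of_nonneg (by linarith)
        rw [h1, h2, ← Real.exp_add]
        congr 1
        ring
      rw [Finset.sum_congr rfl hterm, Finset.sum_const, Finset.card_range]
      push_cast
      ring
    have := (hasSum_nat_add_iff (f := f) (k + 1)).mp htail
    rwa [hfin] at this
  have hsum := HasSum.of_nat_of_neg_add_one hpos hneg
  have hval : Real.exp (-η * (k : ℝ)) * q * (1 - q)⁻¹ + ((k : ℝ) + 1) * Real.exp (-η * (k : ℝ))
      + Real.exp (-η * (k : ℝ)) * q * (1 - q)⁻¹
      = Real.exp (-η * (k : ℝ)) * ((k : ℝ) + 1 + 2 * q / (1 - q)) := by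
    field_simp
    ring
  rwa [hval] at hsum

/-- Key convolution sum for arbitrary `n : ℤ`. -/
lemma hasSum_conv (η : ℝ) (hη : 0 < η) (n : ℤ) :
    HasSum (fun m : ℤ => Real.exp (-η * |(m : ℝ)|) * Real.exp (-η * |(n : ℝ) - (m : ℝ)|))
      (Real.exp (-η * |(n : ℝ)|) *
        (|(n : ℝ)| + 1 + 2 * Real.exp (-(2 * η)) / (1 - Real.exp (-(2 * η))))) := by
  rcases n with k | k
  · -- n = (k : ℕ)
    have h := hasSum_conv_nat η hη k
    have hcast : ((Int.ofNat k : ℤ) : ℝ) = (k : ℝ) := by simp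
    rw [hcast, abs_of_nonneg (Nat.cast_nonneg k)]
    exact h
  · -- n = Int.negSucc k = -(k+1)
    have h := hasSum_conv_nat η hη (k + 1)
    have hcast : ((Int.negSucc k : ℤ) : ℝ) = -((k : ℝ) + 1) := by
      simp [Int.cast_negSucc]
    rw [hcast]
    have habs : |(-((k : ℝ) + 1))| = (k : ℝ) + 1 := by
      rw [abs_neg, abs_of_nonneg (by positivity)]
    rw [habs]
    refine ((Equiv.neg ℤ).hasSum_iff).mp ?_
    have hfun : ((fun m : ℤ => Real.exp (-η * |(m : ℝ)|)
          * Real.exp (-η * |(-((k : ℝ) + 1)) - (m : ℝ)|)) ∘ ⇑(Equiv.neg ℤ))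
        = fun m : ℤ => Real.exp (-η * |(m : ℝ)|)
          * Real.exp (-η * |((k + 1 : ℕ) : ℝ) - (m : ℝ)|) := by
      funext m
      simp only [Function.comp_apply, Equiv.neg_apply, Int.cast_neg, abs_neg]
      congr 1
      rw [show (-((k : ℝ) + 1)) - (-(m : ℝ)) = -(((k : ℝ) + 1) - (m : ℝ)) by ring, abs_neg]
      congr 2
      push_cast
      ring
    rw [hfun]
    push_cast at h ⊢
    exact h

/-- **Existence of a positive smooth 2L-periodic travelling wave of the rBO
equation**, for `L > π` and `c > 1 + π/(L−π)`; the travelling-wave equation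
`cHφ' + (c−1)φ − φ²/2 = 0` is expressed through its (equivalent) Fourier
coefficient form. -/
theorem periodic_travelling_wave_exists (L c : ℝ)
    (hL : Real.pi < L) (hc : 1 + Real.pi / (L - Real.pi) < c) :
    0 < ηc L c ∧
    (∀ ξ : ℝ, 0 < φwave L c ξ) ∧
    (∀ ξ : ℝ, φwave L c (ξ + 2 * L) = φwave L c ξ) ∧
    ContDiff ℝ (⊤ : ℕ∞) (φwave L c) ∧
    (∀ n : ℤ,
      c * (1 + (Real.pi / L) * |(n : ℝ)|) * awave L c n - awave L c n
        = (1 / 2) * ∑' m : ℤ, awave L c m * awave L c (n - m)) := by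
  have hπ : 0 < Real.pi := Real.pi_pos
  have hL0 : 0 < L := lt_trans hπ hL
  have hLπ : 0 < L - Real.pi := by linarith
  have hc1 : 1 < c := by
    have : 0 < Real.pi / (L - Real.pi) := div_pos hπ hLπ
    linarith
  have hc0 : 0 < c := by linarith
  have hcπ : c * Real.pi < (c - 1) * L := by
    have h1 : Real.pi / (L - Real.pi) < c - 1 := by linarith
    have h2 : Real.pi < (c - 1) * (L - Real.pi) := by
      rw [div_lt_iff₀ hLπ] at h1
      linarith
    nlinarith
  obtain ⟨x, hxdef⟩ : ∃ x : ℝ, x = c * Real.pi / ((c - 1) * L) := ⟨_, rfl⟩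
  have hden : 0 < (c - 1) * L := mul_pos (by linarith) hL0
  have hx0 : 0 < x := hxdef ▸ div_pos (by positivity) hden
  have hx1 : x < 1 := hxdef ▸ (div_lt_one hden).mpr hcπ
  set η := ηc L c with hηdef
  have hηval : η = (1 / 2) * Real.log ((1 + x) / (1 - x)) := by rw [hxdef]; rfl
  have hr1 : 1 < (1 + x) / (1 - x) := by
    rw [lt_div_iff₀ (by linarith)]
    linarith
  have hη : 0 < η := by
    rw [hηval]
    have := Real.log_pos hr1
    linarith
  have hqval : Real.exp (-(2 * η)) = (1 - x) / (1 + x) := by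
    rw [hηval, show -(2 * ((1 / 2) * Real.log ((1 + x) / (1 - x))))
        = -Real.log ((1 + x) / (1 - x)) by ring,
      Real.exp_neg, Real.exp_log (div_pos (by linarith) (by linarith)), inv_div]
  have hcosh : 1 < Real.cosh η := Real.one_lt_cosh.mpr (ne_of_gt hη)
  have hsinh : 0 < Real.sinh η := Real.sinh_pos_iff.mpr hη
  have hφ : ∀ ξ : ℝ, φwave L c ξ
      = (2 * c * Real.pi / L) * Real.sinh η / (Real.cosh η - Real.cos (Real.pi * ξ / L)) :=
    fun _ => rfl
  refine ⟨hη, ?_, ?_, ?_, ?_⟩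
  · intro ξ
    rw [hφ]
    apply div_pos (mul_pos (by positivity) hsinh)
    have := Real.cos_le_one (Real.pi * ξ / L)
    linarith
  · intro ξ
    rw [hφ, hφ]
    have harg : Real.pi * (ξ + 2 * L) / L = Real.pi * ξ / L + 2 * Real.pi := by
      field_simp
    rw [harg, Real.cos_add_two_pi]
  · have hrw : φwave L c = fun ξ =>
        (2 * c * Real.pi / L) * Real.sinh η / (Real.cosh η - Real.cos (Real.pi * ξ / L)) :=
      funext hφ
    rw [hrw]
    apply ContDiff.div contDiff_const
    · exact contDiff_const.sub
        (Real.contDiff_cos.comp ((contDiff_const.mul contDiff_id).div_const L))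
    · intro ξ
      have := Real.cos_le_one (Real.pi * ξ / L)
      have : (0:ℝ) < Real.cosh η - Real.cos (Real.pi * ξ / L) := by linarith
      exact ne_of_gt this
  · intro n
    have hconv := hasSum_conv η hη n
    set A := 2 * Real.pi * c / L with hAdef
    have hfun : (fun m : ℤ => awave L c m * awave L c (n - m))
        = fun m : ℤ => (A * A) * (Real.exp (-η * |(m : ℝ)|)
            * Real.exp (-η * |(n : ℝ) - (m : ℝ)|)) := by
      funext m
      show (A * Real.exp (-η * |(m : ℝ)|)) * (A * Real.exp (-η * |((n - m : ℤ) : ℝ)|)) = _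
      have : |((n - m : ℤ) : ℝ)| = |(n : ℝ) - (m : ℝ)| := by push_cast; ring_nf
      rw [this]
      ring
    have hsum : HasSum (fun m : ℤ => awave L c m * awave L c (n - m))
        ((A * A) * (Real.exp (-η * |(n : ℝ)|) *
          (|(n : ℝ)| + 1 + 2 * Real.exp (-(2 * η)) / (1 - Real.exp (-(2 * η)))))) := by
      rw [hfun]
      exact hconv.mul_left _
    rw [hsum.tsum_eq]
    have haw : awave L c n = A * Real.exp (-η * |(n : ℝ)|) := rfl
    rw [haw]
    set q := Real.exp (-(2 * η)) with hqd
    have hq1' : q < 1 := by rw [hqd, Real.exp_lt_one_iff]; linarith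
    have hxne : x ≠ 0 := ne_of_gt hx0
    have h1x : (0:ℝ) < 1 + x := by linarith
    have h1q : (0:ℝ) < 1 - q := by linarith
    have hsplit : 1 + 2 * q / (1 - q) = (1 + q) / (1 - q) := by
      field_simp [ne_of_gt h1q]
      ring
    have hBx : Real.pi * c / L * (1 + q) = (c - 1) * (1 - q) := by
      rw [hqval]
      have hc1ne : c - 1 ≠ 0 := ne_of_gt (by linarith)
      have hLne : L ≠ 0 := ne_of_gt hL0
      have h1xne : 1 + x ≠ 0 := ne_of_gt (by linarith)
      have hx' : x * ((c - 1) * L) = c * Real.pi := by rw [hxdef]; field_simp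
      field_simp
      linear_combination (-2) * hx'
    have hkey : (Real.pi * c / L) * (1 + 2 * q / (1 - q)) = c - 1 := by
      rw [hsplit, mul_div_assoc', div_eq_iff (ne_of_gt h1q), hBx]
    rw [hAdef]
    set E := Real.exp (-η * |(n : ℝ)|) with hEd
    set N := |(n : ℝ)| with hNd
    linear_combination (-(2 * Real.pi * c / L * E)) * hkey
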